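/- The formal power series identity (1 + x² + 2x³ + 3x⁴)·T(x)² = x²·T'(x) holds, where T(x) = Σ_{n≥0} T_n x^n is the ordinary generating function of the Tetranacci numbers. -/

import Mathlib

/-!
The recurrence says `Q T = X` with `Q = 1 - X - X² - X³ - X⁴`, so `T = X / Q` and the quotient
rule gives `X² T' = (Q - X Q') T²`; here `Q - X Q' = 1 + X² + 2X³ + 3X⁴`.
-/

open PowerSeries

/-- The Tetranacci numbers. -/
def tetra : ℕ → ℤ
  | 0 => 0
  | 1 => 1
  | 2 => 1
  | 3 => 2
  | n + 4 => tetra (n + 3) + tetra (n + 2) + tetra (n + 1) + tetra n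

/-- The quotient rule for `t = x / q` without division: differentiating `q t = x` gives
`q D t = 1 - t D q`; multiply by `x t = q t²`. -/
theorem Derivation.sq_mul_apply_of_mul_eq {R A : Type*} [CommSemiring R] [CommRing A] [Algebra R A]
    (D : Derivation R A A) {x q t : A} (hx : D x = 1) (h : q * t = x) :
    x ^ 2 * D t = (q - x * D q) * t ^ 2 := by
  have hD : q * D t + t * D q = 1 := by
    simpa only [Derivation.leibniz, smul_eq_mul, hx, add_comm] using congrArg D h
  rw [← h]
  linear_combination q * t ^ 2 * hD

theorem tetra_gf_mul_eq_X :
    (1 - X - X ^ 2 - X ^ 3 - X ^ 4 : ℤ⟦X⟧) * (PowerSeries.mk fun n => tetra n) = X := by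
  ext n
  rcases n with _ | _ | _ | _ | n <;>
    simp [sub_mul, coeff_X, coeff_X_pow_mul', tetra, sub_eq_zero, add_assoc]

theorem derivative_tetra_denominator :
    d⁄dX ℤ (1 - X - X ^ 2 - X ^ 3 - X ^ 4 : ℤ⟦X⟧) = -1 - 2 * X - 3 * X ^ 2 - 4 * X ^ 3 := by
  simp [Derivation.leibniz_pow]

theorem tetra_gf_deriv_identity :
    (1 + (X : ℤ⟦X⟧) ^ 2 + 2 * X ^ 3 + 3 * X ^ 4) * (PowerSeries.mk fun n => tetra n) ^ 2
      = X ^ 2 * PowerSeries.derivativeFun (PowerSeries.mk fun n => tetra n) := by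
  have key := (derivative ℤ).sq_mul_apply_of_mul_eq derivative_X tetra_gf_mul_eq_X
  rw [derivative_tetra_denominator] at key
  change _ = X ^ 2 * d⁄dX ℤ _
  rw [key]
  ring
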